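/- Let (A,∘,B) be a finite-dimensional quadratic Novikov algebra, J a nonzero isotropic ideal, V a complement of J^⊥ in A, and S = J ⊕ V. Define on S^⊥ the product x⋄y as the S^⊥-component of x∘y in the decomposition J^⊥ = J ⊕ S^⊥. Then (S^⊥, ⋄, B restricted to S^⊥ × S^⊥) is a quadratic Novikov algebra isomorphic (as quadratic Novikov algebra) to the quotient quadratic Novikov algebra (J^⊥/J, ∘̄, B̄), via the map sending x ∈ S^⊥ to its class x̄ ∈ J^⊥/J. -/

import Mathlib

/-!
Isotropy gives `J ≤ J^⊥`, and `A = J^⊥ ⊕ V` forces `dim V = dim J`. The space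
`S^⊥ = J^⊥ ∩ V^⊥` meets `J` trivially (a common element is orthogonal to `J^⊥ + V = A`)
and has dimension `dim A - 2 dim J`, so `J^⊥ = J ⊕ S^⊥`. Hence `x ↦ x̄` is a linear
bijection from `S^⊥` onto `J^⊥/J`, and `⋄` is the quotient product transported along it.
Every identity of `(S^⊥, ⋄)` can thus be checked after projecting to `A/J`, where it becomes
the corresponding identity of `∘`; the form is preserved because `B(J, J^⊥) = 0`.
-/

open Submodule LinearMap.BilinForm

section Orthogonal

variable {k A : Type*} [Field k] [AddCommGroup A] [Module k A]
  {B : LinearMap.BilinForm k A} {J V : Submodule k A}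

theorem LinearMap.BilinForm.mem_orthogonal_sup {W W' : Submodule k A} {x : A}
    (hx : x ∈ B.orthogonal W) (hx' : x ∈ B.orthogonal W') : x ∈ B.orthogonal (W ⊔ W') := by
  intro n hn
  obtain ⟨u, hu, v, hv, rfl⟩ := mem_sup.mp hn
  simp [hx u hu, hx' v hv]

theorem LinearMap.BilinForm.disjoint_orthogonal_sup (hB : B.Nondegenerate) (hBr : B.IsRefl)
    (hV : IsCompl (B.orthogonal J) V) : Disjoint J (B.orthogonal (J ⊔ V)) := by
  refine disjoint_def.mpr fun x hxJ hxP => ?_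
  have hx : x ∈ B.orthogonal ⊤ := hV.sup_eq_top ▸
    mem_orthogonal_sup (fun u hu => hBr _ _ (hu x hxJ)) (fun v hv => hxP v (mem_sup_right hv))
  simpa [B.orthogonal_top_eq_bot hB] using hx

theorem LinearMap.BilinForm.sup_orthogonal_sup_eq [FiniteDimensional k A] (hB : B.Nondegenerate)
    (hBr : B.IsRefl) (hJ : J ≤ B.orthogonal J) (hV : IsCompl (B.orthogonal J) V) :
    J ⊔ B.orthogonal (J ⊔ V) = B.orthogonal J := by
  refine eq_of_le_of_finrank_le (sup_le hJ (B.orthogonal_le le_sup_left)) ?_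
  have hJP := finrank_sup_add_finrank_inf_eq J (B.orthogonal (J ⊔ V))
  have hJV := finrank_sup_add_finrank_inf_eq J V
  rw [(disjoint_orthogonal_sup hB hBr hV).eq_bot, finrank_bot] at hJP
  rw [(hV.disjoint.mono_left hJ).eq_bot, finrank_bot] at hJV
  have hJperp := finrank_orthogonal hB J
  have hP := finrank_orthogonal hB (J ⊔ V)
  have hsum := finrank_add_eq_of_isCompl hV
  have hJle := finrank_le J
  omega

theorem LinearMap.BilinForm.disjoint_orthogonal_sup_orthogonal [FiniteDimensional k A]
    (hB : B.Nondegenerate) (hBr : B.IsRefl) (hJ : J ≤ B.orthogonal J)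
    (hV : IsCompl (B.orthogonal J) V) :
    Disjoint (B.orthogonal (J ⊔ V)) (B.orthogonal (B.orthogonal (J ⊔ V))) := by
  refine disjoint_def.mpr fun x hxP hxP' => ?_
  have hx : x ∈ B.orthogonal ((J ⊔ B.orthogonal (J ⊔ V)) ⊔ V) :=
    mem_orthogonal_sup (mem_orthogonal_sup (B.orthogonal_le le_sup_left hxP) hxP')
      (B.orthogonal_le le_sup_right hxP)
  rw [sup_orthogonal_sup_eq hB hBr hJ hV, hV.sup_eq_top, B.orthogonal_top_eq_bot hB] at hx
  simpa using hx

end Orthogonal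

section Quotient

variable {R M : Type*} [Ring R] [AddCommGroup M] [Module R M] {J P : Submodule R M}

theorem Submodule.mkQ_coe_injective_of_disjoint (h : Disjoint J P) :
    Function.Injective (fun x : P => J.mkQ x) := by
  intro x y hxy
  have hJ : (x : M) - y ∈ J := (Quotient.eq J).mp hxy
  exact Subtype.ext (sub_eq_zero.mp (disjoint_def.mp h _ hJ (sub_mem x.2 y.2)))

theorem Submodule.exists_mkQ_coe_eq_of_mem_sup {z : M} (hz : z ∈ J ⊔ P) :
    ∃ p : P, J.mkQ p = J.mkQ z := by
  obtain ⟨j, hj, p, hp, rfl⟩ := mem_sup.mp hz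
  exact ⟨⟨p, hp⟩, (Quotient.eq J).mpr (by simpa using neg_mem hj)⟩

theorem Submodule.range_mkQ_coe_eq_image_sup :
    Set.range (fun x : P => J.mkQ x) = J.mkQ '' (J ⊔ P : Submodule R M) := by
  ext c
  constructor
  · rintro ⟨x, rfl⟩
    exact ⟨x, mem_sup_right x.2, rfl⟩
  · rintro ⟨z, hz, rfl⟩
    exact exists_mkQ_coe_eq_of_mem_sup hz

end Quotient

section Ideal

variable {k A : Type*} [CommRing k] [AddCommGroup A] [Module k A]
  (mul : A →ₗ[k] A →ₗ[k] A) {J : Submodule k A}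

theorem mkQ_mul_eq_mkQ_mul (hJ : ∀ a ∈ J, ∀ x : A, mul a x ∈ J ∧ mul x a ∈ J)
    {a a' b b' : A} (ha : J.mkQ a = J.mkQ a') (hb : J.mkQ b = J.mkQ b') :
    J.mkQ (mul a b) = J.mkQ (mul a' b') := by
  simp only [mkQ_apply, Submodule.Quotient.eq] at ha hb ⊢
  have hsplit : mul a b - mul a' b' = mul (a - a') b + mul a' (b - b') := by
    simp only [map_sub, LinearMap.sub_apply]
    abel
  exact hsplit ▸ add_mem (hJ _ ha b).1 (hJ _ hb a').2

theorem mul_mem_orthogonal (hJ : ∀ a ∈ J, ∀ x : A, mul a x ∈ J ∧ mul x a ∈ J)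
    {B : LinearMap.BilinForm k A} (hsym : ∀ a b, B a b = B b a)
    (hinv : ∀ a b c, B (mul a b) c = -(B b (mul a c + mul c a)))
    {y : A} (hy : y ∈ B.orthogonal J) (x : A) : mul x y ∈ B.orthogonal J := by
  intro j hj
  rw [hsym, hinv, hsym, hy _ (add_mem (hJ j hj x).2 (hJ j hj x).1), neg_zero]

end Ideal

section TransportedProduct

variable {k A : Type*} [CommRing k] [AddCommGroup A] [Module k A]
  {mul : A →ₗ[k] A →ₗ[k] A} {J P : Submodule k A} {dmul : P → P → P}

theorem mkQ_dmul_dmul_left (hJ : ∀ a ∈ J, ∀ x : A, mul a x ∈ J ∧ mul x a ∈ J)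
    (hd : ∀ x y, J.mkQ (dmul x y) = J.mkQ (mul x y)) (x y z : P) :
    J.mkQ (dmul (dmul x y) z) = J.mkQ (mul (mul x y) z) :=
  (hd _ _).trans (mkQ_mul_eq_mkQ_mul mul hJ (hd x y) rfl)

theorem mkQ_dmul_dmul_right (hJ : ∀ a ∈ J, ∀ x : A, mul a x ∈ J ∧ mul x a ∈ J)
    (hd : ∀ x y, J.mkQ (dmul x y) = J.mkQ (mul x y)) (x y z : P) :
    J.mkQ (dmul x (dmul y z)) = J.mkQ (mul x (mul y z)) :=
  (hd _ _).trans (mkQ_mul_eq_mkQ_mul mul hJ rfl (hd y z))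

theorem dmul_associator_symm (hJ : ∀ a ∈ J, ∀ x : A, mul a x ∈ J ∧ mul x a ∈ J)
    (hd : ∀ x y, J.mkQ (dmul x y) = J.mkQ (mul x y)) (hP : Disjoint J P)
    (hnov : ∀ a b c, mul (mul a b) c - mul a (mul b c) = mul (mul b a) c - mul b (mul a c))
    (x y z : P) :
    (dmul (dmul x y) z : A) - dmul x (dmul y z) = (dmul (dmul y x) z : A) - dmul y (dmul x z) := by
  have h := mkQ_coe_injective_of_disjoint hP
    (a₁ := dmul (dmul x y) z - dmul x (dmul y z)) (a₂ := dmul (dmul y x) z - dmul y (dmul x z))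
    (by simp only [Submodule.coe_sub, map_sub, mkQ_dmul_dmul_left hJ hd, mkQ_dmul_dmul_right hJ hd]
        rw [← map_sub, ← map_sub, hnov])
  simpa using congrArg Subtype.val h

theorem dmul_right_comm (hJ : ∀ a ∈ J, ∀ x : A, mul a x ∈ J ∧ mul x a ∈ J)
    (hd : ∀ x y, J.mkQ (dmul x y) = J.mkQ (mul x y)) (hP : Disjoint J P)
    (hnov : ∀ a b c, mul (mul a b) c = mul (mul a c) b) (x y z : P) :
    dmul (dmul x y) z = dmul (dmul x z) y :=
  mkQ_coe_injective_of_disjoint hP <| by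
    simp only [mkQ_dmul_dmul_left hJ hd, hnov]

theorem dmul_invariant (hd : ∀ x y, J.mkQ (dmul x y) = J.mkQ (mul x y))
    {B : LinearMap.BilinForm k A} (hsym : ∀ a b, B a b = B b a)
    (hinv : ∀ a b c, B (mul a b) c = -(B b (mul a c + mul c a))) (hPJ : P ≤ B.orthogonal J)
    (x y z : P) : B (dmul x y : A) z = -(B (y : A) ((dmul x z : A) + dmul z x)) := by
  have hform : ∀ {a a' : A}, J.mkQ a = J.mkQ a' → ∀ w : P, B a w = B a' w := fun h w => by
    rw [← sub_eq_zero, ← LinearMap.sub_apply, ← map_sub]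
    exact hPJ w.2 _ ((Submodule.Quotient.eq J).mp h)
  have hsum : J.mkQ ((dmul x z : A) + dmul z x) = J.mkQ (mul x z + mul z x) := by
    simp only [map_add, hd]
  rw [hform (hd x y) z, hinv, hsym y, hsym y, hform hsum y]

end TransportedProduct

theorem quadratic_novikov_perp_complement_iso_quotient
    {k A : Type*} [Field k] [AddCommGroup A] [Module k A]
    [FiniteDimensional k A]
    (mul : A →ₗ[k] A →ₗ[k] A) (B : LinearMap.BilinForm k A)
    (hnov1 : ∀ a b c, mul (mul a b) c - mul a (mul b c) = mul (mul b a) c - mul b (mul a c))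
    (hnov2 : ∀ a b c, mul (mul a b) c = mul (mul a c) b)
    (hsym : ∀ a b, B a b = B b a)
    (hnd : ∀ a, (∀ b, B a b = 0) → a = 0)
    (hinv : ∀ a b c, B (mul a b) c = -(B b (mul a c + mul c a)))
    (J : Submodule k A)
    (hJideal : ∀ a ∈ J, ∀ x : A, mul a x ∈ J ∧ mul x a ∈ J)
    (hJiso : ∀ x ∈ J, ∀ y ∈ J, B x y = 0)
    (V : Submodule k A) (hV : IsCompl (B.orthogonal J) V)
    (S : Submodule k A) (hS : S = J ⊔ V) :
    ∃ dmul : (B.orthogonal S) → (B.orthogonal S) → (B.orthogonal S),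
      -- dmul x y is the S^⊥-component of x∘y : x∘y - x⋄y ∈ J
      (∀ x y : B.orthogonal S, (mul (x : A) (y : A) - (dmul x y : A)) ∈ J) ∧
      -- (S^⊥, ⋄) is a Novikov algebra
      (∀ x y z : B.orthogonal S,
        ((dmul (dmul x y) z : A) - (dmul x (dmul y z) : A))
          = ((dmul (dmul y x) z : A) - (dmul y (dmul x z) : A))) ∧
      (∀ x y z : B.orthogonal S, dmul (dmul x y) z = dmul (dmul x z) y) ∧
      -- B restricted to S^⊥ is nondegenerate and invariant for ⋄
      (∀ x : B.orthogonal S, (∀ y : B.orthogonal S, B (x : A) (y : A) = 0) → x = 0) ∧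
      (∀ x y z : B.orthogonal S,
        B ((dmul x y : A)) (z : A)
          = -(B (y : A) ((dmul x z : A) + (dmul z x : A)))) ∧
      -- x ↦ x̄ is an isomorphism of quadratic Novikov algebras onto J^⊥/J:
      Function.Injective
        (fun x : B.orthogonal S => (Submodule.Quotient.mk (x : A) : A ⧸ J)) ∧
      (Set.range (fun x : B.orthogonal S => (Submodule.Quotient.mk (x : A) : A ⧸ J))
        = (Submodule.Quotient.mk : A → A ⧸ J) '' (B.orthogonal J : Set A)) ∧
      -- it intertwines ⋄ with the quotient product (x̄ ∘̄ ȳ = overline{x∘y}), and the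
      -- quotient form B̄(x̄,ȳ) = B(x,y) is preserved by definition of B̄
      (∀ x y : B.orthogonal S,
        (Submodule.Quotient.mk ((dmul x y : A)) : A ⧸ J)
          = Submodule.Quotient.mk (mul (x : A) (y : A))) := by
  subst hS
  have hBr : B.IsRefl := fun x y h => (hsym y x).trans h
  have hB : B.Nondegenerate := hBr.nondegenerate_iff_separatingLeft.mpr hnd
  have hJJ : J ≤ B.orthogonal J := fun y hy x hx => hJiso x hx y hy
  have hPJ : B.orthogonal (J ⊔ V) ≤ B.orthogonal J := B.orthogonal_le le_sup_left
  have hdisj := disjoint_orthogonal_sup hB hBr hV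
  have hsup := sup_orthogonal_sup_eq hB hBr hJJ hV
  choose d hd using fun x y : B.orthogonal (J ⊔ V) =>
    exists_mkQ_coe_eq_of_mem_sup (hsup ▸ mul_mem_orthogonal mul hJideal hsym hinv (hPJ y.2) x)
  refine ⟨d, fun x y => (Submodule.Quotient.eq J).mp (hd x y).symm,
    dmul_associator_symm hJideal hd hdisj hnov1, dmul_right_comm hJideal hd hdisj hnov2,
    (nondegenerate_restrict_of_disjoint_orthogonal B hBr
      (disjoint_orthogonal_sup_orthogonal hB hBr hJJ hV)).1,
    dmul_invariant hd hsym hinv hPJ, mkQ_coe_injective_of_disjoint hdisj, ?_, hd⟩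
  rw [← hsup]
  exact range_mkQ_coe_eq_image_sup
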